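/- Let V ⊂ ℝ³ be a bounded open set containing the origin and let ρ(x) = |x|. Suppose v is smooth on V \ {0} and satisfies Σ_{|α| ≤ m} ‖ρ^{-a+|α|} ∂^α v‖²_{L²(V)} < ∞ for some integer m ≥ 0 and real a. Then for every integer 0 ≤ l ≤ m, the function ρ^{-a+l} v lies in H^l(V) and ‖ρ^{-a+l} v‖²_{H^l(V)} ≤ C Σ_{|α| ≤ m} ‖ρ^{-a+|α|} ∂^α v‖²_{L²(V)}, where C depends only on m, a, and the diameter of V. -/

import Mathlib

/-!
On `V \ {0}` the Leibniz rule writes `∂^β (ρ^c v)` as a sum `∑ φᵢ ∂^{γᵢ} v` with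
`|γᵢ| ≤ |β|`, where the coefficients `φᵢ` do not depend on `v` and are smooth and positively
homogeneous of degree `c - |β| + |γᵢ|` away from the origin. Homogeneity and compactness of the
unit sphere give `|φᵢ| ≤ K ρ^{c - |β| + |γᵢ|}`. For `c = l - a` and `|β| ≤ l` the surplus power
`ρ^{l - |β|}` is bounded on the bounded set `V`, so pointwise
`|∂^β (ρ^{l-a} v)|² ≤ K ∑_{|γ| ≤ m} (ρ^{|γ|-a} ∂^γ v)²`, and integrating over `V` (the origin is
a null set) gives the estimate.
-/

open MeasureTheory

noncomputable section

abbrev P3 := ℝ × ℝ × ℝ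

/-- ρ(x,y,z) = √(x² + y² + z²). -/
def rho3 (p : P3) : ℝ := Real.sqrt (p.1 ^ 2 + p.2.1 ^ 2 + p.2.2 ^ 2)

def pdx (f : P3 → ℝ) : P3 → ℝ := fun p => fderiv ℝ f p (1, 0, 0)
def pdy (f : P3 → ℝ) : P3 → ℝ := fun p => fderiv ℝ f p (0, 1, 0)
def pdz (f : P3 → ℝ) : P3 → ℝ := fun p => fderiv ℝ f p (0, 0, 1)

/-- ∂^α = ∂_x^{α₁} ∂_y^{α₂} ∂_z^{α₃}. -/
def D3 (α : ℕ × ℕ × ℕ) (f : P3 → ℝ) : P3 → ℝ := pdx^[α.1] (pdy^[α.2.1] (pdz^[α.2.2] f))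

/-- |α| = α₁ + α₂ + α₃. -/
def wt3 (α : ℕ × ℕ × ℕ) : ℕ := α.1 + α.2.1 + α.2.2

/-- The multi-indices with |α| ≤ m. -/
def idx3 (m : ℕ) : Finset (ℕ × ℕ × ℕ) :=
  ((Finset.range (m+1)) ×ˢ (Finset.range (m+1)) ×ˢ (Finset.range (m+1))).filter
    fun α => wt3 α ≤ m

/-- Σ_{|α| ≤ m} ‖ρ^{-a+|α|} ∂^α v‖²_{L²(V)}. -/
def WS3 (V : Set P3) (m : ℕ) (a : ℝ) (v : P3 → ℝ) : ℝ :=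
  ∑ α ∈ idx3 m, ∫ p in V, (rho3 p ^ ((wt3 α : ℝ) - a) * D3 α v p) ^ 2

/-- Squared H^l(V) norm: Σ_{|α| ≤ l} ‖∂^α w‖²_{L²(V)}. -/
def HN3 (V : Set P3) (l : ℕ) (w : P3 → ℝ) : ℝ :=
  ∑ α ∈ idx3 l, ∫ p in V, (D3 α w p) ^ 2

open scoped ContDiff

section Homogeneous

variable {E : Type*} [NormedAddCommGroup E] [NormedSpace ℝ E]

def IsSmoothHomogeneous (e : ℝ) (φ : E → ℝ) : Prop :=
  ContDiffOn ℝ ∞ φ {0}ᶜ ∧ ∀ t : ℝ, 0 < t → ∀ p ≠ 0, φ (t • p) = t ^ e * φ p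

theorem ContDiffOn.fderiv_apply_of_isOpen {F : Type*} [NormedAddCommGroup F] [NormedSpace ℝ F]
    {U : Set E} (hU : IsOpen U) {f : E → F} (hf : ContDiffOn ℝ ∞ f U) (u : E) :
    ContDiffOn ℝ ∞ (fun p => fderiv ℝ f p u) U :=
  (hf.fderiv_of_isOpen hU le_rfl).clm_apply contDiffOn_const

namespace IsSmoothHomogeneous

variable {e f : ℝ} {φ ψ : E → ℝ}

theorem differentiableAt (hφ : IsSmoothHomogeneous e φ) {p : E} (hp : p ≠ 0) :
    DifferentiableAt ℝ φ p :=
  (hφ.1.contDiffAt (isOpen_compl_singleton.mem_nhds hp)).differentiableAt (by simp)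

theorem mul (hφ : IsSmoothHomogeneous e φ) (hψ : IsSmoothHomogeneous f ψ) :
    IsSmoothHomogeneous (e + f) (fun p => φ p * ψ p) := by
  refine ⟨hφ.1.mul hψ.1, fun t ht p hp => ?_⟩
  beta_reduce
  rw [hφ.2 t ht p hp, hψ.2 t ht p hp, Real.rpow_add ht]
  ring

theorem fderiv_apply (hφ : IsSmoothHomogeneous e φ) (u : E) :
    IsSmoothHomogeneous (e - 1) (fun p => fderiv ℝ φ p u) := by
  refine ⟨hφ.1.fderiv_apply_of_isOpen isOpen_compl_singleton u, fun t ht p hp => ?_⟩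
  have htp : t • p ≠ 0 := smul_ne_zero ht.ne' hp
  -- differentiate `φ (t • q) = t ^ e * φ q` at `q = p`
  have hscaled : HasFDerivAt (fun q => φ (t • q))
      ((fderiv ℝ φ (t • p)).comp (t • ContinuousLinearMap.id ℝ E)) p :=
    (hφ.differentiableAt htp).hasFDerivAt.comp p
      ((ContinuousLinearMap.id ℝ E).hasFDerivAt.const_smul t)
  have hrhs : HasFDerivAt (fun q => t ^ e * φ q) (t ^ e • fderiv ℝ φ p) p :=
    (hφ.differentiableAt hp).hasFDerivAt.const_mul _
  have heq : (fun q => φ (t • q)) =ᶠ[nhds p] fun q => t ^ e * φ q :=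
    Filter.eventually_of_mem (isOpen_compl_singleton.mem_nhds hp) fun q hq => hφ.2 t ht q hq
  have h := congrArg (fun L => L u) ((hscaled.congr_of_eventuallyEq heq.symm).unique hrhs)
  simp only [ContinuousLinearMap.comp_apply, FunLike.coe_smul, Pi.smul_apply,
    ContinuousLinearMap.id_apply, map_smul, smul_eq_mul] at h
  rw [Real.rpow_sub ht, Real.rpow_one]
  field_simp
  linarith

theorem exists_abs_le [ProperSpace E] (hφ : IsSmoothHomogeneous e φ) :
    ∃ K, 0 ≤ K ∧ ∀ p ≠ 0, |φ p| ≤ K * ‖p‖ ^ e := by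
  obtain ⟨K, hK⟩ := (isCompact_sphere (0 : E) 1).exists_bound_of_continuousOn
    (hφ.1.continuousOn.mono fun q hq => by rintro rfl; simp at hq)
  refine ⟨max K 0, le_max_right _ _, fun p hp => ?_⟩
  have hnorm : 0 < ‖p‖ := norm_pos_iff.mpr hp
  have hunit : ‖p‖⁻¹ • p ∈ Metric.sphere (0 : E) 1 := by
    simp [norm_smul, hnorm.ne']
  have hp' : ‖p‖⁻¹ • p ≠ 0 := by simpa [hnorm.ne'] using hp
  calc |φ p| = |φ (‖p‖ • ‖p‖⁻¹ • p)| := by rw [smul_inv_smul₀ hnorm.ne']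
    _ = ‖p‖ ^ e * |φ (‖p‖⁻¹ • p)| := by
      rw [hφ.2 _ hnorm _ hp', abs_mul, abs_of_pos (Real.rpow_pos_of_pos hnorm e)]
    _ ≤ ‖p‖ ^ e * max K 0 :=
      mul_le_mul_of_nonneg_left ((hK _ hunit).trans (le_max_left _ _)) (by positivity)
    _ = max K 0 * ‖p‖ ^ e := mul_comm _ _

end IsSmoothHomogeneous

end Homogeneous

theorem rho3_nonneg (p : P3) : 0 ≤ rho3 p := Real.sqrt_nonneg _

theorem rho3_pos {p : P3} (hp : p ≠ 0) : 0 < rho3 p := by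
  obtain ⟨x, y, z⟩ := p
  refine Real.sqrt_pos.mpr (lt_of_le_of_ne (by positivity) fun h => hp ?_)
  have hx : x = 0 := by nlinarith [sq_nonneg x, sq_nonneg y, sq_nonneg z]
  have hy : y = 0 := by nlinarith [sq_nonneg x, sq_nonneg y, sq_nonneg z]
  have hz : z = 0 := by nlinarith [sq_nonneg x, sq_nonneg y, sq_nonneg z]
  simp [hx, hy, hz]

theorem rho3_smul {t : ℝ} (ht : 0 ≤ t) (p : P3) : rho3 (t • p) = t * rho3 p := by
  simp only [rho3, Prod.smul_fst, Prod.smul_snd, smul_eq_mul]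
  rw [← Real.sqrt_sq ht, ← Real.sqrt_mul (sq_nonneg t), Real.sqrt_sq ht]
  ring_nf

theorem rho3_le_two_mul_norm (p : P3) : rho3 p ≤ 2 * ‖p‖ := by
  have hx : |p.1| ≤ ‖p‖ := norm_fst_le p
  have hy : |p.2.1| ≤ ‖p‖ := (norm_fst_le p.2).trans (norm_snd_le p)
  have hz : |p.2.2| ≤ ‖p‖ := (norm_snd_le p.2).trans (norm_snd_le p)
  refine Real.sqrt_le_iff.mpr ⟨by positivity, ?_⟩
  nlinarith [sq_abs p.1, sq_abs p.2.1, sq_abs p.2.2, abs_nonneg p.1, abs_nonneg p.2.1,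
    abs_nonneg p.2.2]

theorem isSmoothHomogeneous_rho3_rpow (c : ℝ) :
    IsSmoothHomogeneous c (fun p => rho3 p ^ c) := by
  refine ⟨fun p hp => ContDiffAt.contDiffWithinAt ?_, fun t ht p _ => ?_⟩
  · have hρ := rho3_pos hp
    have hsq : ContDiffAt ℝ ∞ (fun q : P3 => q.1 ^ 2 + q.2.1 ^ 2 + q.2.2 ^ 2) p := by fun_prop
    exact (hsq.sqrt (Real.sqrt_pos.mp hρ).ne').rpow_const_of_ne hρ.ne'
  · beta_reduce
    rw [rho3_smul ht.le, Real.mul_rpow ht.le (rho3_nonneg p)]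

theorem IsSmoothHomogeneous.exists_abs_le_rho3 {e : ℝ} {φ : P3 → ℝ}
    (hφ : IsSmoothHomogeneous e φ) :
    ∃ K, 0 ≤ K ∧ ∀ p ≠ 0, |φ p| ≤ K * rho3 p ^ e := by
  have hψ := (isSmoothHomogeneous_rho3_rpow (-e)).mul hφ
  rw [neg_add_cancel] at hψ
  obtain ⟨K, hK0, hK⟩ := hψ.exists_abs_le
  refine ⟨K, hK0, fun p hp => ?_⟩
  have hρ := rho3_pos hp
  have h := hK p hp
  rw [Real.rpow_zero, mul_one, abs_mul, abs_of_pos (Real.rpow_pos_of_pos hρ _),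
    Real.rpow_neg hρ.le] at h
  exact ((inv_mul_le_iff₀ (Real.rpow_pos_of_pos hρ e)).mp h).trans_eq (mul_comm _ _)

theorem contDiffOn_D3 {U : Set P3} (hU : IsOpen U) {v : P3 → ℝ} (hv : ContDiffOn ℝ ∞ v U)
    (γ : ℕ × ℕ × ℕ) : ContDiffOn ℝ ∞ (D3 γ v) U := by
  have pd (u : P3) (f : P3 → ℝ) (hf : ContDiffOn ℝ ∞ f U) :
      ContDiffOn ℝ ∞ (fun p => fderiv ℝ f p u) U := hf.fderiv_apply_of_isOpen hU u
  exact Function.Iterate.rec (fun f => ContDiffOn ℝ ∞ f U)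
    (Function.Iterate.rec (fun f => ContDiffOn ℝ ∞ f U)
      (Function.Iterate.rec (fun f => ContDiffOn ℝ ∞ f U) hv (pd _) _) (pd _) _) (pd _) _

theorem pdx_D3 (γ : ℕ × ℕ × ℕ) (f : P3 → ℝ) :
    pdx (D3 γ f) = D3 (γ.1 + 1, γ.2.1, γ.2.2) f :=
  (Function.iterate_succ_apply' pdx _ _).symm

theorem pdy_D3 {γ : ℕ × ℕ × ℕ} (hγ : γ.1 = 0) (f : P3 → ℝ) :
    pdy (D3 γ f) = D3 (γ.1, γ.2.1 + 1, γ.2.2) f := by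
  obtain ⟨_, b, c⟩ := γ
  subst hγ
  exact (Function.iterate_succ_apply' pdy _ _).symm

theorem pdz_D3 {γ : ℕ × ℕ × ℕ} (hγ : γ.1 = 0 ∧ γ.2.1 = 0) (f : P3 → ℝ) :
    pdz (D3 γ f) = D3 (γ.1, γ.2.1, γ.2.2 + 1) f := by
  obtain ⟨_, _, c⟩ := γ
  obtain ⟨rfl, rfl⟩ := hγ
  exact (Function.iterate_succ_apply' pdz _ _).symm

theorem mem_idx3 {m : ℕ} {γ : ℕ × ℕ × ℕ} : γ ∈ idx3 m ↔ wt3 γ ≤ m := by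
  obtain ⟨a, b, c⟩ := γ
  rw [idx3, Finset.mem_filter]
  simp only [Finset.mem_product, Finset.mem_range, wt3]
  omega

/-- The coefficients `φᵢ` are fixed before `v`, so bounds on them are uniform in `v`. The shape
constraint `γᵢ ∈ S` lets `∂_y` and `∂_z` be pushed through `D3` (which applies `∂_z`, then `∂_y`,
then `∂_x`) without commuting partial derivatives. -/
def HasExpansion (U : Set P3) (S : Set (ℕ × ℕ × ℕ)) (d : ℝ) (n : ℕ)
    (T : (P3 → ℝ) → P3 → ℝ) : Prop :=
  ∃ (ι : Type) (_ : Fintype ι) (φ : ι → P3 → ℝ) (γ : ι → ℕ × ℕ × ℕ),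
    (∀ i, γ i ∈ S ∧ wt3 (γ i) ≤ n ∧ IsSmoothHomogeneous (d + wt3 (γ i)) (φ i)) ∧
    ∀ v, ContDiffOn ℝ ∞ v U → ∀ p ∈ U, T v p = ∑ i, φ i p * D3 (γ i) v p

namespace HasExpansion

variable {U : Set P3} {S : Set (ℕ × ℕ × ℕ)} {d : ℝ} {n : ℕ}
  {T : (P3 → ℝ) → P3 → ℝ}

theorem mono (h : HasExpansion U S d n T) {S' : Set (ℕ × ℕ × ℕ)} (hS : S ⊆ S') :
    HasExpansion U S' d n T := by
  obtain ⟨ι, _, φ, γ, hφγ, hT⟩ := h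
  exact ⟨ι, _, φ, γ, fun i => ⟨hS (hφγ i).1, (hφγ i).2⟩, hT⟩

theorem fderiv_apply (hU : IsOpen U) (hU0 : (0 : P3) ∉ U) {u : P3}
    {σ : ℕ × ℕ × ℕ → ℕ × ℕ × ℕ} (hσS : ∀ γ ∈ S, σ γ ∈ S)
    (hσwt : ∀ γ, wt3 (σ γ) = wt3 γ + 1)
    (hσ : ∀ γ ∈ S, ∀ f, (fun p => fderiv ℝ (D3 γ f) p u) = D3 (σ γ) f)
    (h : HasExpansion U S d n T) :
    HasExpansion U S (d - 1) (n + 1) (fun v p => fderiv ℝ (T v) p u) := by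
  obtain ⟨ι, _, φ, γ, hφγ, hT⟩ := h
  refine ⟨ι ⊕ ι, inferInstance, Sum.elim (fun i p => fderiv ℝ (φ i) p u) φ,
    Sum.elim γ (σ ∘ γ), ?_, fun v hv p hp => ?_⟩
  · rintro (i | i) <;> obtain ⟨hS, hwt, hφ⟩ := hφγ i
    · simp only [Sum.elim_inl]
      refine ⟨hS, by omega, ?_⟩
      convert hφ.fderiv_apply u using 1
      ring
    · simp only [Sum.elim_inr, Function.comp_apply, hσwt]
      refine ⟨hσS _ hS, by omega, ?_⟩
      convert hφ using 1
      push_cast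
      ring
  · have hp0 : p ≠ 0 := fun h => hU0 (h ▸ hp)
    have hD : ∀ i, DifferentiableAt ℝ (D3 (γ i) v) p := fun i =>
      ((contDiffOn_D3 hU hv (γ i)).contDiffAt (hU.mem_nhds hp)).differentiableAt (by simp)
    have hφ : ∀ i, DifferentiableAt ℝ (φ i) p := fun i => (hφγ i).2.2.differentiableAt hp0
    beta_reduce
    rw [Filter.EventuallyEq.fderiv_eq (Filter.eventually_of_mem (hU.mem_nhds hp) (hT v hv)),
      fderiv_fun_sum (A := fun i x => φ i x * D3 (γ i) v x) fun i _ => (hφ i).mul (hD i),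
      sum_apply, Fintype.sum_sum_type, ← Finset.sum_add_distrib]
    refine Finset.sum_congr rfl fun i _ => ?_
    rw [fderiv_fun_mul (hφ i) (hD i)]
    simp only [add_apply, FunLike.coe_smul, Pi.smul_apply, smul_eq_mul,
      Sum.elim_inl, Sum.elim_inr, Function.comp_apply, ← hσ _ (hφγ i).1]
    ring

theorem iterate_fderiv_apply (hU : IsOpen U) (hU0 : (0 : P3) ∉ U) {u : P3}
    {σ : ℕ × ℕ × ℕ → ℕ × ℕ × ℕ} (hσS : ∀ γ ∈ S, σ γ ∈ S)
    (hσwt : ∀ γ, wt3 (σ γ) = wt3 γ + 1)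
    (hσ : ∀ γ ∈ S, ∀ f, (fun p => fderiv ℝ (D3 γ f) p u) = D3 (σ γ) f)
    (h : HasExpansion U S d n T) (k : ℕ) :
    HasExpansion U S (d - k) (n + k) (fun v => (fun f p => fderiv ℝ f p u)^[k] (T v)) := by
  induction k with
  | zero => simpa using h
  | succ k ih =>
    have := ih.fderiv_apply hU hU0 hσS hσwt hσ
    simpa only [Nat.cast_succ, ← sub_sub, ← add_assoc, Function.iterate_succ_apply'] using this

theorem exists_sq_le (h : HasExpansion U S d n T) (hU0 : (0 : P3) ∉ U) {m : ℕ} (hnm : n ≤ m)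
    {a M : ℝ} (hda : 0 ≤ d + a) (hM : ∀ p ∈ U, rho3 p ≤ M) :
    ∃ K, 0 ≤ K ∧ ∀ v, ContDiffOn ℝ ∞ v U → ∀ p ∈ U,
      T v p ^ 2 ≤ K * ∑ γ ∈ idx3 m, (rho3 p ^ ((wt3 γ : ℝ) - a) * D3 γ v p) ^ 2 := by
  obtain ⟨ι, _, φ, γ, hφγ, hT⟩ := h
  choose K hK0 hK using fun i => (hφγ i).2.2.exists_abs_le_rho3
  refine ⟨Fintype.card ι * ∑ i, (K i * M ^ (d + a)) ^ 2, by positivity, fun v hv p hp => ?_⟩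
  have hp0 : p ≠ 0 := fun h => hU0 (h ▸ hp)
  have hρ := rho3_pos hp0
  have hterm (i : ι) : |φ i p * D3 (γ i) v p| ≤
      K i * M ^ (d + a) * |rho3 p ^ ((wt3 (γ i) : ℝ) - a) * D3 (γ i) v p| := by
    rw [abs_mul, abs_mul, abs_of_pos (Real.rpow_pos_of_pos hρ _)]
    calc |φ i p| * |D3 (γ i) v p| ≤ K i * rho3 p ^ (d + wt3 (γ i)) * |D3 (γ i) v p| := by
          gcongr; exact hK i p hp0
      _ = K i * rho3 p ^ (d + a) * (rho3 p ^ ((wt3 (γ i) : ℝ) - a) * |D3 (γ i) v p|) := by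
          rw [show d + (wt3 (γ i) : ℝ) = (d + a) + ((wt3 (γ i) : ℝ) - a) by ring,
            Real.rpow_add hρ]
          ring
      _ ≤ K i * M ^ (d + a) * (rho3 p ^ ((wt3 (γ i) : ℝ) - a) * |D3 (γ i) v p|) := by
          gcongr
          · exact hK0 i
          · exact hM p hp
  have hsq (i : ι) : (φ i p * D3 (γ i) v p) ^ 2 ≤ (K i * M ^ (d + a)) ^ 2 *
      ∑ γ ∈ idx3 m, (rho3 p ^ ((wt3 γ : ℝ) - a) * D3 γ v p) ^ 2 := by
    calc (φ i p * D3 (γ i) v p) ^ 2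
        ≤ (K i * M ^ (d + a)) ^ 2 * (rho3 p ^ ((wt3 (γ i) : ℝ) - a) * D3 (γ i) v p) ^ 2 := by
          rw [← sq_abs, ← sq_abs (_ * D3 (γ i) v p), ← mul_pow]
          exact pow_le_pow_left₀ (abs_nonneg _) (hterm i) 2
      _ ≤ _ := by
          gcongr
          exact Finset.single_le_sum
            (f := fun γ => (rho3 p ^ ((wt3 γ : ℝ) - a) * D3 γ v p) ^ 2) (fun _ _ => sq_nonneg _)
            (mem_idx3.mpr (((hφγ i).2.1).trans hnm))
  calc T v p ^ 2 = (∑ i, φ i p * D3 (γ i) v p) ^ 2 := by rw [hT v hv p hp]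
    _ ≤ Fintype.card ι * ∑ i, (φ i p * D3 (γ i) v p) ^ 2 := sq_sum_le_card_mul_sum_sq
    _ ≤ Fintype.card ι * ∑ i, (K i * M ^ (d + a)) ^ 2 *
          ∑ γ ∈ idx3 m, (rho3 p ^ ((wt3 γ : ℝ) - a) * D3 γ v p) ^ 2 := by
        gcongr with i; exact hsq i
    _ = _ := by rw [← Finset.sum_mul, mul_assoc]

end HasExpansion

theorem hasExpansion_rho3_rpow_mul (U : Set P3) (c : ℝ) :
    HasExpansion U {γ | γ.1 = 0 ∧ γ.2.1 = 0} c 0 (fun v q => rho3 q ^ c * v q) :=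
  ⟨Unit, inferInstance, fun _ q => rho3 q ^ c, fun _ => 0,
    fun _ => ⟨⟨rfl, rfl⟩, le_rfl, by simpa [wt3] using isSmoothHomogeneous_rho3_rpow c⟩,
    fun v _ p _ => by simp [D3]⟩

theorem hasExpansion_D3_rho3_rpow_mul {U : Set P3} (hU : IsOpen U) (hU0 : (0 : P3) ∉ U)
    (c : ℝ) (β : ℕ × ℕ × ℕ) :
    HasExpansion U Set.univ (c - wt3 β) (wt3 β)
      (fun v => D3 β (fun q => rho3 q ^ c * v q)) := by
  obtain ⟨b₁, b₂, b₃⟩ := β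
  have hz := (hasExpansion_rho3_rpow_mul U c).iterate_fderiv_apply hU hU0 (u := (0, 0, 1))
    (σ := fun γ => (γ.1, γ.2.1, γ.2.2 + 1)) (fun _ hγ => hγ) (fun _ => by simp only [wt3]; omega)
    (fun _ hγ f => pdz_D3 hγ f) b₃
  have hy := (hz.mono fun _ hγ => hγ.1).iterate_fderiv_apply hU hU0 (u := (0, 1, 0))
    (σ := fun γ => (γ.1, γ.2.1 + 1, γ.2.2)) (fun _ hγ => hγ) (fun _ => by simp only [wt3]; omega)
    (fun _ hγ f => pdy_D3 hγ f) b₂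
  have hx := (hy.mono (Set.subset_univ _)).iterate_fderiv_apply hU hU0 (u := (1, 0, 0))
    (σ := fun γ => (γ.1 + 1, γ.2.1, γ.2.2)) (fun _ _ => Set.mem_univ _)
    (fun _ => by simp only [wt3]; omega)
    (fun γ _ f => pdx_D3 γ f) b₁
  convert hx using 1
  · simp only [wt3]; push_cast; ring
  · simp only [wt3]; ring
  · rfl

theorem integrable_sq_and_integral_sq_le {α : Type*} [MeasurableSpace α] {μ : Measure α}
    {f g : α → ℝ} {K : ℝ} (hf : AEStronglyMeasurable f μ) (hg : Integrable g μ)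
    (hfg : ∀ᵐ x ∂μ, f x ^ 2 ≤ K * g x) :
    Integrable (fun x => f x ^ 2) μ ∧ ∫ x, f x ^ 2 ∂μ ≤ K * ∫ x, g x ∂μ := by
  have hint : Integrable (fun x => f x ^ 2) μ :=
    (hg.const_mul K).mono' (hf.pow 2)
      (hfg.mono fun x hx => by rwa [Real.norm_of_nonneg (sq_nonneg _)])
  exact ⟨hint, integral_const_mul K g ▸ integral_mono_ae hint (hg.const_mul K) hfg⟩

theorem volume_restrict_diff_zero (V : Set P3) :
    volume.restrict (V \ {0}) = volume.restrict V := by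
  refine Measure.restrict_congr_set (sdiff_null_ae_eq_self (measure_mono_null
    (show ({0} : Set P3) ⊆ {0} ×ˢ Set.univ by simp) ?_))
  rw [Measure.volume_eq_prod, Measure.prod_prod]
  simp

theorem exists_integral_sq_D3_rho3_rpow_mul_le {V : Set P3} (hVo : IsOpen V) {M : ℝ}
    (hM : ∀ p ∈ V, rho3 p ≤ M) {l m : ℕ} (hlm : l ≤ m) (a : ℝ) {β : ℕ × ℕ × ℕ}
    (hβ : wt3 β ≤ l) :
    ∃ K, 0 ≤ K ∧ ∀ v, ContDiffOn ℝ ∞ v (V \ {0}) →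
      (∀ α ∈ idx3 m, Integrable (fun p => (rho3 p ^ ((wt3 α : ℝ) - a) * D3 α v p) ^ 2)
        (volume.restrict V)) →
      Integrable (fun p => (D3 β (fun q => rho3 q ^ ((l : ℝ) - a) * v q) p) ^ 2)
        (volume.restrict V) ∧
      ∫ p in V, (D3 β (fun q => rho3 q ^ ((l : ℝ) - a) * v q) p) ^ 2 ≤ K * WS3 V m a v := by
  have hU : IsOpen (V \ {0}) := hVo.sdiff isClosed_singleton
  have hU0 : (0 : P3) ∉ V \ {0} := fun h => h.2 rfl
  have hda : 0 ≤ (l : ℝ) - a - wt3 β + a := by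
    have : (wt3 β : ℝ) ≤ l := by exact_mod_cast hβ
    linarith
  obtain ⟨K, hK0, hK⟩ := (hasExpansion_D3_rho3_rpow_mul hU hU0 ((l : ℝ) - a) β).exists_sq_le
    hU0 (hβ.trans hlm) hda fun p hp => hM p hp.1
  refine ⟨K, hK0, fun v hv hint => ?_⟩
  have hw : ContDiffOn ℝ ∞ (fun q => rho3 q ^ ((l : ℝ) - a) * v q) (V \ {0}) :=
    ((isSmoothHomogeneous_rho3_rpow _).1.mono fun _ hp => hp.2).mul hv
  have hmeas : AEStronglyMeasurable (D3 β (fun q => rho3 q ^ ((l : ℝ) - a) * v q))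
      (volume.restrict V) := by
    rw [← volume_restrict_diff_zero]
    exact (contDiffOn_D3 hU hw β).continuousOn.aestronglyMeasurable hU.measurableSet
  have hbound : ∀ᵐ p ∂(volume.restrict V),
      D3 β (fun q => rho3 q ^ ((l : ℝ) - a) * v q) p ^ 2 ≤
        K * ∑ γ ∈ idx3 m, (rho3 p ^ ((wt3 γ : ℝ) - a) * D3 γ v p) ^ 2 := by
    rw [← volume_restrict_diff_zero]
    filter_upwards [ae_restrict_mem hU.measurableSet] with p hp
    exact hK v hv p hp
  obtain ⟨hint', hle⟩ :=
    integrable_sq_and_integral_sq_le hmeas (integrable_finsetSum _ hint) hbound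
  refine ⟨hint', hle.trans_eq ?_⟩
  rw [integral_finsetSum _ hint, WS3]

theorem stmt_3_general (V : Set P3) (hVo : IsOpen V) (hVb : Bornology.IsBounded V)
    (m : ℕ) (a : ℝ) :
    ∃ C > 0, ∀ v : P3 → ℝ, ContDiffOn ℝ (⊤ : ℕ∞) v (V \ {0}) →
      (∀ α ∈ idx3 m,
        Integrable (fun p => (rho3 p ^ ((wt3 α : ℝ) - a) * D3 α v p) ^ 2)
          (volume.restrict V)) →
      ∀ l ≤ m,
        (∀ α ∈ idx3 l,
          Integrable (fun p => (D3 α (fun q => rho3 q ^ ((l : ℝ) - a) * v q) p) ^ 2)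
            (volume.restrict V)) ∧
        HN3 V l (fun q => rho3 q ^ ((l : ℝ) - a) * v q) ≤ C * WS3 V m a v := by
  obtain ⟨R, hR⟩ := isBounded_iff_forall_norm_le.mp hVb
  have hM : ∀ p ∈ V, rho3 p ≤ 2 * R := fun p hp =>
    (rho3_le_two_mul_norm p).trans (by linarith [hR p hp])
  choose! K hK0 hK using fun l (hl : l ≤ m) β (hβ : β ∈ idx3 l) =>
    exists_integral_sq_D3_rho3_rpow_mul_le hVo hM hl a (mem_idx3.mp hβ)
  have hsum0 : ∀ l ∈ Finset.range (m + 1), 0 ≤ ∑ β ∈ idx3 l, K l β := fun l hl =>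
    Finset.sum_nonneg fun β hβ => hK0 l (Nat.lt_succ_iff.mp (Finset.mem_range.mp hl)) β hβ
  refine ⟨1 + ∑ l ∈ Finset.range (m + 1), ∑ β ∈ idx3 l, K l β,
    by linarith [Finset.sum_nonneg hsum0], fun v hv hint l hl => ?_⟩
  have hWS : 0 ≤ WS3 V m a v :=
    Finset.sum_nonneg fun _ _ => integral_nonneg fun _ => sq_nonneg _
  refine ⟨fun β hβ => (hK l hl β hβ v hv hint).1, ?_⟩
  calc HN3 V l (fun q => rho3 q ^ ((l : ℝ) - a) * v q)
      ≤ ∑ β ∈ idx3 l, K l β * WS3 V m a v :=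
        Finset.sum_le_sum fun β hβ => (hK l hl β hβ v hv hint).2
    _ = (∑ β ∈ idx3 l, K l β) * WS3 V m a v := (Finset.sum_mul ..).symm
    _ ≤ (1 + ∑ l ∈ Finset.range (m + 1), ∑ β ∈ idx3 l, K l β) * WS3 V m a v := by
        gcongr
        linarith [Finset.single_le_sum hsum0 (Finset.mem_range.mpr (Nat.lt_succ_of_le hl))]

/-- if Σ_{|α|≤m} ‖ρ^{-a+|α|} ∂^α v‖²_{L²(V)} < ∞ then for every l ≤ m,
ρ^{-a+l} v ∈ H^l(V) and ‖ρ^{-a+l} v‖²_{H^l(V)} ≤ C Σ_{|α|≤m} ‖ρ^{-a+|α|} ∂^α v‖²_{L²(V)},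
with C depending only on m, a and V. -/
theorem stmt_3 (V : Set P3) (hVo : IsOpen V) (hVb : Bornology.IsBounded V)
    (h0 : (0 : P3) ∈ V) (m : ℕ) (a : ℝ) :
    ∃ C > 0, ∀ v : P3 → ℝ, ContDiffOn ℝ (⊤ : ℕ∞) v (V \ {0}) →
      (∀ α ∈ idx3 m,
        Integrable (fun p => (rho3 p ^ ((wt3 α : ℝ) - a) * D3 α v p) ^ 2)
          (volume.restrict V)) →
      ∀ l ≤ m,
        (∀ α ∈ idx3 l,
          Integrable (fun p => (D3 α (fun q => rho3 q ^ ((l : ℝ) - a) * v q) p) ^ 2)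
            (volume.restrict V)) ∧
        HN3 V l (fun q => rho3 q ^ ((l : ℝ) - a) * v q) ≤ C * WS3 V m a v :=
  stmt_3_general V hVo hVb m a
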